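/- Let T be a finite directed tree satisfying (G1), (G2), (G3), and let F be the forest obtained by performing the splitting operation (remove the split node, remove the leaf on its incoming arc, and cap each outgoing arc with a new leaf) simultaneously at every split node of T. Then every connected component of F satisfies (G1), (G2), (G3), has no split node, and contains exactly one peak node (node of in-degree 3). -/

import Mathlib

structure DirTree where
  V : Type
  [fintypeV : Fintype V]
  arc : V → V → Prop
  noLoop : ∀ v, ¬ arc v v
  noTwoWay : ∀ u v, arc u v → ¬ arc v u
  isTree : (SimpleGraph.fromRel arc).IsTree

attribute [instance] DirTree.fintypeV

namespace DirTree
variable (T : DirTree)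

/-- Number of outgoing arcs at `v`. -/
noncomputable def outDeg (v : T.V) : ℕ := Nat.card {u : T.V // T.arc v u}

/-- Number of incoming arcs at `v`. -/
noncomputable def inDeg (v : T.V) : ℕ := Nat.card {u : T.V // T.arc u v}

/-- Total degree of `v`. -/
noncomputable def deg (v : T.V) : ℕ := T.inDeg v + T.outDeg v

/-- A leaf is a node of total degree 1. -/
def IsLeaf (v : T.V) : Prop := T.deg v = 1

/-- (G1): every leaf has in-degree 0 and out-degree 1. -/
def G1 : Prop := ∀ v, T.IsLeaf v → T.inDeg v = 0 ∧ T.outDeg v = 1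

/-- (G2): every interior node has total degree 3 and at most two outgoing arcs. -/
def G2 : Prop := ∀ v, ¬ T.IsLeaf v → T.deg v = 3 ∧ T.outDeg v ≤ 2

/-- (G3): every node of out-degree 2 has its incoming arcs coming from leaves. -/
def G3 : Prop := ∀ v, T.outDeg v = 2 → ∀ u, T.arc u v → T.IsLeaf u

/-- A split node has out-degree 2. -/
def IsSplit (v : T.V) : Prop := T.outDeg v = 2

/-- A peak node has in-degree 3. -/
def IsPeak (v : T.V) : Prop := T.inDeg v = 3

end DirTree

/-- A node of `T` survives the simultaneous splitting operation iff it is neither a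
split node nor a leaf whose outgoing arc enters a split node. -/
def Kept (T : DirTree) (v : T.V) : Prop :=
  ¬ T.IsSplit v ∧ ¬ (T.IsLeaf v ∧ ∃ w, T.IsSplit w ∧ T.arc v w)

/-- Vertex set of the forest `F`: the surviving nodes of `T` together with one new
leaf for every outgoing arc `(s, u)` of every split node `s`. -/
def ForestV (T : DirTree) : Type :=
  {v : T.V // Kept T v} ⊕ {p : T.V × T.V // T.IsSplit p.1 ∧ T.arc p.1 p.2}

/-- Arc relation of the forest `F`: old arcs among surviving nodes are kept, and the
new leaf corresponding to an outgoing arc `(s, u)` gets a single arc to `u`. -/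
def ForestArc (T : DirTree) : ForestV T → ForestV T → Prop
  | Sum.inl a, Sum.inl b => T.arc a.1 b.1
  | Sum.inr p, Sum.inl b => p.1.2 = b.1
  | _, _ => False

noncomputable def foutDeg (T : DirTree) (v : ForestV T) : ℕ :=
  Nat.card {u : ForestV T // ForestArc T v u}

noncomputable def finDeg (T : DirTree) (v : ForestV T) : ℕ :=
  Nat.card {u : ForestV T // ForestArc T u v}

noncomputable def fdeg (T : DirTree) (v : ForestV T) : ℕ := finDeg T v + foutDeg T v

/-- The underlying undirected graph of the forest `F`. -/
def ForestGraph (T : DirTree) : SimpleGraph (ForestV T) := SimpleGraph.fromRel (ForestArc T)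


/-!
A node that survives the splitting keeps its in- and out-degree (an arc from a split node `s`
into `u` becomes the arc from the new leaf `(s, u)`), so (G1) and (G2) carry over, no split node
remains, and every node of the forest has out-degree at most one. Sending the new leaf `(s, u)`
to `s` is a graph homomorphism to `T`, injective away from the new leaves, which have a single
neighbour and so lie on no cycle; hence the forest is acyclic. A peak is exactly a sink, and an
acyclic graph oriented with out-degrees at most one has exactly one sink in each component:
following the arcs must stop, since a directed cycle would be an undirected one, and by
functionality every walk into a sink follows the arcs.
-/

namespace SimpleGraph

variable {V V' : Type*} {G : SimpleGraph V} {G' : SimpleGraph V'}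

theorem Walk.IsCycle.not_subsingleton_neighborSet {v x : V} {c : G.Walk v v} (hc : c.IsCycle)
    (hx : x ∈ c.support) : ¬ (G.neighborSet x).Subsingleton := by
  classical
  intro h
  have hc' := hc.rotate hx
  exact hc'.snd_ne_penultimate <| h (Walk.adj_snd hc'.not_nil)
    (Walk.adj_penultimate hc'.not_nil).symm

theorem IsAcyclic.of_hom_injOn (f : G →g G') (s : Set V)
    (hs : ∀ v ∉ s, (G.neighborSet v).Subsingleton) (hf : Set.InjOn f s) (h : G'.IsAcyclic) :
    G.IsAcyclic := by
  intro v c hc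
  have hsupp : ∀ x ∈ c.support, x ∈ s := fun x hx =>
    by_contra fun hxs => hc.not_subsingleton_neighborSet hx (hs x hxs)
  have hcs : (c.induce s hsupp).IsCycle := Walk.IsCycle.of_map (f := (Embedding.induce s).toHom)
    (by rwa [Walk.map_induce])
  exact h.comap (f.comp (Embedding.induce s).toHom)
    (fun x y hxy => Subtype.ext (hf x.2 y.2 hxy)) _ hcs

section Orientation

open Relation

variable {r : V → V → Prop}

theorem fromRel_adj_of_rel (hr : ∀ ⦃x y⦄, r x y → ¬ r y x) {x y : V} (h : r x y) :
    (fromRel r).Adj x y :=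
  (fromRel_adj r x y).2 ⟨fun e => hr h (e ▸ h), Or.inl h⟩

theorem reachable_fromRel_of_reflTransGen (hr : ∀ ⦃x y⦄, r x y → ¬ r y x) {x y : V}
    (h : ReflTransGen r x y) : (fromRel r).Reachable x y :=
  (reachable_iff_reflTransGen x y).2 (ReflTransGen.mono (fun _ _ => fromRel_adj_of_rel hr) x y h)

/-- Following `r` from `x` to `w` never uses the edge `s(w, w')` of an arc `r w w'`: reaching
`w` ends the walk, and the reverse arc `r w' w` does not exist. -/
theorem reachable_deleteEdges_of_reflTransGen (hr : ∀ ⦃x y⦄, r x y → ¬ r y x) {w w' x : V}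
    (hw : r w w') (h : ReflTransGen r x w) :
    ((fromRel r).deleteEdges {s(w, w')}).Reachable x w := by
  induction h using ReflTransGen.head_induction_on with
  | refl => rfl
  | @head x y hxy _ ih =>
    by_cases hxw : x = w
    · rw [hxw]
    refine Adj.reachable ?_ |>.trans ih
    refine (deleteEdges_adj ..).2 ⟨fromRel_adj_of_rel hr hxy, ?_⟩
    intro he
    rcases Sym2.eq_iff.1 (Set.mem_singleton_iff.1 he) with ⟨rfl, -⟩ | ⟨rfl, rfl⟩
    exacts [hxw rfl, hr hw hxy]

theorem IsAcyclic.not_transGen_self (hr : ∀ ⦃x y⦄, r x y → ¬ r y x)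
    (hG : (fromRel r).IsAcyclic) (x : V) : ¬ TransGen r x x := by
  intro h
  obtain ⟨x', hxx', hx'x⟩ := TransGen.head'_iff.1 h
  have hbridge := isAcyclic_iff_forall_adj_isBridge.1 hG (fromRel_adj_of_rel hr hxx')
  exact isBridge_iff.1 hbridge (reachable_deleteEdges_of_reflTransGen hr hxx' hx'x).symm

theorem IsAcyclic.exists_sink [Finite V] (hr : ∀ ⦃x y⦄, r x y → ¬ r y x)
    (hG : (fromRel r).IsAcyclic) (v : V) : ∃ b, ReflTransGen r v b ∧ ∀ u, ¬ r b u := by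
  have hwf : WellFounded (flip (TransGen r)) :=
    @Finite.wellFounded_of_trans_of_irrefl _ _ _ ⟨fun _ _ _ hab hbc => hbc.trans hab⟩
      ⟨hG.not_transGen_self hr⟩
  obtain ⟨b, hvb, hmin⟩ := hwf.has_min {b | ReflTransGen r v b} ⟨v, .refl⟩
  exact ⟨b, hvb, fun u hbu => hmin u (hvb.tail hbu) (.single hbu)⟩

theorem reflTransGen_of_walk_of_sink (hfun : ∀ ⦃x y z⦄, r x y → r x z → y = z) {a b : V}
    (hb : ∀ u, ¬ r b u) (p : (fromRel r).Walk a b) : ReflTransGen r a b := by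
  induction p with
  | nil => rfl
  | @cons a c b hac q ih =>
    rcases ((fromRel_adj ..).1 hac).2 with hac | hca
    · exact .head hac (ih hb)
    · rcases (ih hb).cases_head with rfl | ⟨d, hcd, hdb⟩
      · exact absurd hca (hb a)
      · exact hfun hcd hca ▸ hdb

theorem IsAcyclic.existsUnique_sink [Finite V] (hr : ∀ ⦃x y⦄, r x y → ¬ r y x)
    (hfun : ∀ ⦃x y z⦄, r x y → r x z → y = z) (hG : (fromRel r).IsAcyclic)
    (c : (fromRel r).ConnectedComponent) :
    ∃! b, (fromRel r).connectedComponentMk b = c ∧ ∀ u, ¬ r b u := by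
  induction c using ConnectedComponent.ind with | h v => ?_
  obtain ⟨b, hvb, hb⟩ := hG.exists_sink hr v
  refine ⟨b, ⟨(ConnectedComponent.sound (reachable_fromRel_of_reflTransGen hr hvb)).symm, hb⟩, ?_⟩
  rintro y ⟨hyv, hy⟩
  obtain ⟨p⟩ := ConnectedComponent.exact (hyv.trans (ConnectedComponent.sound
    (reachable_fromRel_of_reflTransGen hr hvb)))
  rcases (reflTransGen_of_walk_of_sink hfun hb p).cases_head with rfl | ⟨d, hyd, -⟩
  exacts [rfl, absurd hyd (hy d)]

end Orientation

end SimpleGraph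

namespace DirTree

variable {T : DirTree}

theorem outDeg_pos_of_arc {u v : T.V} (h : T.arc u v) : 0 < T.outDeg u :=
  Nat.card_pos_iff.2 ⟨⟨⟨v, h⟩⟩, inferInstance⟩

theorem inDeg_pos_of_arc {u v : T.V} (h : T.arc u v) : 0 < T.inDeg v :=
  Nat.card_pos_iff.2 ⟨⟨⟨u, h⟩⟩, inferInstance⟩

theorem eq_of_arc_of_outDeg_le_one {v a b : T.V} (hv : T.outDeg v ≤ 1) (ha : T.arc v a)
    (hb : T.arc v b) : a = b :=
  congrArg Subtype.val <|
    (Finite.card_le_one_iff_subsingleton.1 hv).elim (⟨a, ha⟩ : {u // T.arc v u}) ⟨b, hb⟩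

theorem IsLeaf.outDeg_le_one {v : T.V} (hv : T.IsLeaf v) : T.outDeg v ≤ 1 := by
  have : T.inDeg v + T.outDeg v = 1 := hv
  omega

theorem not_isLeaf_of_arc_of_arc {u v w : T.V} (huv : T.arc u v) (hvw : T.arc v w) :
    ¬ T.IsLeaf v := by
  intro hv
  have : T.inDeg v + T.outDeg v = 1 := hv
  have := inDeg_pos_of_arc huv
  have := outDeg_pos_of_arc hvw
  omega

theorem IsSplit.not_isLeaf {v : T.V} (hv : T.IsSplit v) : ¬ T.IsLeaf v :=
  fun hl => by have := hl.outDeg_le_one; have : T.outDeg v = 2 := hv; omega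

theorem outDeg_le_two (hG2 : T.G2) (v : T.V) : T.outDeg v ≤ 2 := by
  by_cases hv : T.IsLeaf v
  · exact hv.outDeg_le_one.trans one_le_two
  · exact (hG2 v hv).2

end DirTree

open DirTree

section Forest

variable {T : DirTree}

instance : Finite (ForestV T) := inferInstanceAs (Finite (_ ⊕ _))

theorem not_isLeaf_feeding_split_of_arc {a w : T.V} (h : T.arc a w) :
    ¬ (T.IsLeaf w ∧ ∃ s, T.IsSplit s ∧ T.arc w s) :=
  fun ⟨hw, _, _, hws⟩ => not_isLeaf_of_arc_of_arc h hws hw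

theorem Kept.of_arc (hG3 : T.G3) {a w : T.V} (ha : Kept T a) (h : T.arc a w) : Kept T w :=
  ⟨fun hw => ha.2 ⟨hG3 w hw a h, w, hw, h⟩, not_isLeaf_feeding_split_of_arc h⟩

theorem kept_of_isSplit_of_arc (hG3 : T.G3) {s u : T.V} (hs : T.IsSplit s) (h : T.arc s u) :
    Kept T u :=
  ⟨fun hu => hs.not_isLeaf (hG3 u hu s h), not_isLeaf_feeding_split_of_arc h⟩

def forestProj (T : DirTree) : ForestV T → T.V
  | .inl a => a.1
  | .inr p => p.1.1

theorem arc_forestProj {x y : ForestV T} (h : ForestArc T x y) :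
    T.arc (forestProj T x) (forestProj T y) := by
  rcases x with a | p <;> rcases y with b | q
  · exact h
  · exact h.elim
  · have h : p.1.2 = b.1 := h
    show T.arc p.1.1 b.1
    exact h ▸ p.2.2
  · exact h.elim

theorem not_forestArc_inr {x : ForestV T} {p} : ¬ ForestArc T x (.inr p) := by
  rcases x with a | q <;> exact id

theorem forestArc_asymm {x y : ForestV T} (h : ForestArc T x y) : ¬ ForestArc T y x := by
  rcases x with a | p <;> rcases y with b | q
  · exact T.noTwoWay a.1 b.1 h
  all_goals first | exact h.elim | exact not_forestArc_inr

theorem eq_of_forestArc_inr {p} {y z : ForestV T} (hy : ForestArc T (.inr p) y)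
    (hz : ForestArc T (.inr p) z) : y = z := by
  rcases y with b | q <;> rcases z with c | q'
  · exact congrArg Sum.inl (Subtype.ext ((hy : p.1.2 = b.1).symm.trans hz))
  all_goals first | exact hy.elim | exact hz.elim

theorem forestArc_functional (hG2 : T.G2) {x y z : ForestV T} (hy : ForestArc T x y)
    (hz : ForestArc T x z) : y = z := by
  rcases x with a | p
  · have ha : T.outDeg a.1 ≤ 1 := by
      have := outDeg_le_two hG2 a.1
      have : T.outDeg a.1 ≠ 2 := a.2.1
      omega
    rcases y with b | q <;> rcases z with c | q'
    · exact congrArg Sum.inl (Subtype.ext (eq_of_arc_of_outDeg_le_one ha hy hz))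
    all_goals first | exact hy.elim | exact hz.elim
  · exact eq_of_forestArc_inr hy hz

theorem eq_of_forestArc_of_forestProj_eq {x y z : ForestV T} (hx : ForestArc T x z)
    (hy : ForestArc T y z) (h : forestProj T x = forestProj T y) : x = y := by
  rcases x with a | p <;> rcases y with b | q <;> rcases z with c | r <;>
    try exact (not_forestArc_inr ‹_›).elim
  · exact congrArg Sum.inl (Subtype.ext h)
  · have h : a.1 = q.1.1 := h
    exact (a.2.1 (h ▸ q.2.1)).elim
  · have h : p.1.1 = b.1 := h
    exact (b.2.1 (h ▸ p.2.1)).elim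
  · exact congrArg Sum.inr (Subtype.ext (Prod.ext h ((hx : p.1.2 = c.1).trans hy.symm)))

theorem foutDeg_inl (hG3 : T.G3) (a : {v // Kept T v}) : foutDeg T (.inl a) = T.outDeg a.1 := by
  refine Nat.card_eq_of_bijective
    (fun u => ⟨forestProj T u.1, arc_forestProj u.2⟩ : {u // ForestArc T (.inl a) u} → _) ⟨?_, ?_⟩
  · rintro ⟨b | p, hb⟩ ⟨c | q, hc⟩ h
    · have h := Subtype.ext_iff.1 h
      exact Subtype.ext (congrArg Sum.inl (Subtype.ext h))
    all_goals first | exact hb.elim | exact hc.elim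
  · exact fun w => ⟨⟨.inl ⟨w.1, a.2.of_arc hG3 w.2⟩, w.2⟩, rfl⟩

theorem finDeg_inl (a : {v // Kept T v}) : finDeg T (.inl a) = T.inDeg a.1 := by
  refine Nat.card_eq_of_bijective
    (fun u => ⟨forestProj T u.1, arc_forestProj u.2⟩ : {u // ForestArc T u (.inl a)} → _) ⟨?_, ?_⟩
  · exact fun u v h => Subtype.ext
      (eq_of_forestArc_of_forestProj_eq u.2 v.2 (congrArg Subtype.val h))
  · rintro ⟨w, hw⟩
    by_cases hs : T.IsSplit w
    · exact ⟨⟨.inr ⟨(w, a.1), hs, hw⟩, rfl⟩, rfl⟩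
    · refine ⟨⟨.inl ⟨w, hs, ?_⟩, hw⟩, rfl⟩
      rintro ⟨hl, s, hss, hws⟩
      exact a.2.1 (eq_of_arc_of_outDeg_le_one hl.outDeg_le_one hws hw ▸ hss)

theorem foutDeg_inr (hG3 : T.G3) (p : {p : T.V × T.V // T.IsSplit p.1 ∧ T.arc p.1 p.2}) :
    foutDeg T (.inr p) = 1 := by
  refine Nat.card_eq_one_iff_exists.2
    ⟨⟨.inl ⟨p.1.2, kept_of_isSplit_of_arc hG3 p.2.1 p.2.2⟩, rfl⟩, ?_⟩
  rintro ⟨b | q, hb⟩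
  · exact Subtype.ext (congrArg Sum.inl (Subtype.ext (hb : p.1.2 = b.1).symm))
  · exact hb.elim

theorem finDeg_inr (p : {p : T.V × T.V // T.IsSplit p.1 ∧ T.arc p.1 p.2}) :
    finDeg T (.inr p) = 0 :=
  Finite.card_eq_zero_iff.2 ((isEmpty_subtype _).2 fun _ => not_forestArc_inr)

theorem fdeg_inl (hG3 : T.G3) (a : {v // Kept T v}) : fdeg T (.inl a) = T.deg a.1 := by
  unfold fdeg
  rw [finDeg_inl, foutDeg_inl hG3]
  rfl

theorem fdeg_inr (hG3 : T.G3) (p : {p : T.V × T.V // T.IsSplit p.1 ∧ T.arc p.1 p.2}) :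
    fdeg T (.inr p) = 1 := by
  unfold fdeg
  rw [finDeg_inr, foutDeg_inr hG3]

theorem foutDeg_eq_zero_iff {x : ForestV T} : foutDeg T x = 0 ↔ ∀ u, ¬ ForestArc T x u :=
  Finite.card_eq_zero_iff.trans (isEmpty_subtype _)

theorem finDeg_eq_three_iff (hG1 : T.G1) (hG2 : T.G2) (hG3 : T.G3) (x : ForestV T) :
    finDeg T x = 3 ↔ ∀ u, ¬ ForestArc T x u := by
  rw [← foutDeg_eq_zero_iff]
  rcases x with a | p
  · rw [finDeg_inl, foutDeg_inl hG3]
    by_cases hl : T.IsLeaf a.1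
    · have := hG1 a.1 hl
      omega
    · have : T.inDeg a.1 + T.outDeg a.1 = 3 := (hG2 a.1 hl).1
      omega
  · simp [finDeg_inr, foutDeg_inr hG3]

def forestProjHom (T : DirTree) : ForestGraph T →g SimpleGraph.fromRel T.arc where
  toFun := forestProj T
  map_rel' h := by
    rcases ((SimpleGraph.fromRel_adj ..).1 h).2 with hxy | hyx
    · exact SimpleGraph.fromRel_adj_of_rel T.noTwoWay (arc_forestProj hxy)
    · exact (SimpleGraph.fromRel_adj_of_rel T.noTwoWay (arc_forestProj hyx)).symm

theorem forestGraph_isAcyclic (T : DirTree) : (ForestGraph T).IsAcyclic := by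
  refine (T.isTree.isAcyclic).of_hom_injOn (forestProjHom T) (Set.range Sum.inl) ?_ ?_
  · rintro (a | p) hp
    · exact (hp ⟨a, rfl⟩).elim
    · have arc_of_adj : ∀ {y}, (ForestGraph T).Adj (.inr p) y → ForestArc T (.inr p) y :=
        fun h => ((SimpleGraph.fromRel_adj ..).1 h).2.resolve_right not_forestArc_inr
      exact fun y hy z hz => eq_of_forestArc_inr (arc_of_adj hy) (arc_of_adj hz)
  · rintro _ ⟨a, rfl⟩ _ ⟨b, rfl⟩ h
    exact congrArg Sum.inl (Subtype.ext h)

end Forest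

/-- performing the splitting operation simultaneously at every split node of
a (G1)-(G3) directed tree yields a forest each of whose connected components satisfies
(G1)-(G3), has no split node, and contains exactly one peak node (in-degree 3). -/
theorem stmt5 (T : DirTree) (hG1 : T.G1) (hG2 : T.G2) (hG3 : T.G3) :
    (ForestGraph T).IsAcyclic ∧
    (∀ v : ForestV T, fdeg T v = 1 → finDeg T v = 0 ∧ foutDeg T v = 1) ∧
    (∀ v : ForestV T, fdeg T v ≠ 1 → fdeg T v = 3 ∧ foutDeg T v ≤ 2) ∧
    (∀ v : ForestV T, foutDeg T v ≠ 2) ∧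
    (∀ c : (ForestGraph T).ConnectedComponent,
      ∃! v : ForestV T, (ForestGraph T).connectedComponentMk v = c ∧ finDeg T v = 3) := by
  refine ⟨forestGraph_isAcyclic T, ?_, ?_, ?_, fun c => ?_⟩
  · rintro (a | p) h
    · rw [fdeg_inl hG3] at h
      rw [finDeg_inl, foutDeg_inl hG3]
      exact hG1 a.1 h
    · exact ⟨finDeg_inr p, foutDeg_inr hG3 p⟩
  · rintro (a | p) h
    · rw [fdeg_inl hG3] at h ⊢
      rw [foutDeg_inl hG3]
      exact hG2 a.1 h
    · exact (h (fdeg_inr hG3 p)).elim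
  · rintro (a | p)
    · rw [foutDeg_inl hG3]
      exact a.2.1
    · rw [foutDeg_inr hG3]
      decide
  · refine (existsUnique_congr fun v => and_congr_right' (finDeg_eq_three_iff hG1 hG2 hG3 v)).2 ?_
    exact (forestGraph_isAcyclic T).existsUnique_sink (fun _ _ => forestArc_asymm)
      (fun _ _ _ => forestArc_functional hG2) c
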